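/- arXiv:2507.20495 — 2 statements merged into one kernel-verified Lean document; each statement's English description precedes it below -/
import Mathlib

section
/- For classical parking functions (m = n), the statistic lel(π) (number of entries equal to the first entry) and the statistic ones(π) (number of entries equal to 1) are equidistributed over PF(n,n): for every k, #{π ∈ PF(n,n) : lel(π) = k} = #{π ∈ PF(n,n) : ones(π) = k}. -/
/-!
Both statistics are counted with cyclic shifts. Viewed as functions `Fin n → ℤ/(n+1)`, every
orbit under adding constants contains exactly one parking function (Pollak), and `lel` is
shift invariant; hence the parking functions with `lel = k` are as many as the functions `u`
with `u 0 = 0` and exactly `k` zeros, namely `C(n-1,k-1) n^(n-k)`. A parking function whose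
ones sit exactly at `P`, `#P = k`, becomes after subtracting one from its other entries a function
`Pᶜ → ℤ/n` that parks behind `k` cars at the first spot; by the cycle lemma exactly `k` of the
`n` shifts of every such function do, so there are `k n^(n-k-1)` of them for each `P`, and
`C(n,k) k n^(n-k-1) = C(n-1,k-1) n^(n-k)` in total.
-/

/-- The finite set of parking functions `PF(m,n)`, encoded as functions
`Fin m → Fin n`, where the preferred spot of car `k` is `(π k : ℕ) + 1 ∈ {1,…,n}`. -/
def pf (m n : ℕ) : Finset (Fin m → Fin n) :=
  Finset.univ.filter (fun π =>
    ∀ i, i ≤ n → m + i ≤ (Finset.univ.filter (fun k => (π k : ℕ) + 1 ≤ i)).card + n)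

open Finset

theorem card_filter_univ_fin_val {m : ℕ} {P : ℕ → Prop} [DecidablePred P] :
    #{c : Fin m | P c} = #{d ∈ range m | P d} :=
  card_bij (fun c _ => (c : ℕ)) (by simp) (fun _ _ _ _ => Fin.ext)
    fun d hd => by
      simp only [mem_filter, mem_range] at hd
      exact ⟨⟨d, hd.1⟩, by simpa using hd.2, rfl⟩

theorem card_filter_subtype {α : Type*} [Fintype α] (p q : α → Prop) [DecidablePred p]
    [DecidablePred q] : #{x : {x // p x} | q x} = #{x | p x ∧ q x} := by
  rw [← Fintype.card_subtype, ← Fintype.card_subtype]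
  exact Fintype.card_congr (Equiv.subtypeSubtypeEquivSubtypeInter p q)

theorem card_mul_card_filter_mem_powersetCard {α : Type*} [DecidableEq α] {s : Finset α} {a : α}
    (ha : a ∈ s) (k : ℕ) : #s * #{Q ∈ s.powersetCard k | a ∈ Q} = k * (#s).choose k := by
  cases k with
  | zero => simp
  | succ j =>
    simp_rw [← singleton_subset_iff]
    rw [card_filter_powersetCard_subset _ _ _ (singleton_subset_iff.2 ha) (by simp),
      card_singleton, Nat.add_sub_cancel]
    obtain ⟨s', hs'⟩ := Nat.exists_eq_add_one_of_ne_zero (card_ne_zero_of_mem ha)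
    rw [hs', Nat.add_sub_cancel, Nat.add_one_mul_choose_eq, mul_comm]

theorem card_subtype_notMem_add_card {α : Type*} [Fintype α] [DecidableEq α] (P : Finset α) :
    Fintype.card {x // x ∉ P} + #P = Fintype.card α := by
  rw [Fintype.card_subtype_compl, Fintype.card_coe]
  exact Nat.sub_add_cancel (card_le_univ P)

theorem card_filter_zeros_eq {ι G : Type*} [Fintype ι] [DecidableEq ι] [Fintype G] [Zero G]
    [DecidableEq G] (Q : Finset ι) :
    #{u : ι → G | ({i | u i = 0} : Finset ι) = Q} =
      (Fintype.card G - 1) ^ (Fintype.card ι - #Q) := by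
  have hset : ({u : ι → G | ({i | u i = 0} : Finset ι) = Q} : Finset _) =
      Fintype.piFinset fun i => if i ∈ Q then {0} else univ.erase 0 := by
    ext u
    simp only [mem_filter, mem_univ, true_and, Fintype.mem_piFinset, Finset.ext_iff]
    refine forall_congr' fun i => ?_
    split_ifs <;> simp [*]
  rw [hset, Fintype.card_piFinset]
  simp only [apply_ite card, card_singleton, card_erase_of_mem (mem_univ _), card_univ]
  rw [prod_ite, prod_const_one, one_mul, prod_const, filter_notMem_eq_sdiff, card_univ_sdiff]

theorem card_filter_apply_eq_zero_and_card_zeros {ι G : Type*} [Fintype ι] [DecidableEq ι]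
    [Fintype G] [Zero G] [DecidableEq G] (i₀ : ι) (k : ℕ) :
    #{u : ι → G | u i₀ = 0 ∧ #{i | u i = 0} = k} =
      #{Q ∈ powersetCard k univ | i₀ ∈ Q} * (Fintype.card G - 1) ^ (Fintype.card ι - k) := by
  rw [card_eq_sum_card_fiberwise (f := fun u : ι → G => ({i | u i = 0} : Finset ι))
    (t := powersetCard k univ) fun u hu => by simpa using (mem_filter.1 hu).2.2]
  rw [card_filter, sum_mul]
  refine sum_congr rfl fun Q hQ => ?_
  rw [mem_powersetCard] at hQ
  split_ifs with hi₀
  · rw [one_mul, filter_filter, ← hQ.2, ← card_filter_zeros_eq]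
    congr 1
    refine filter_congr fun u _ => ⟨And.right, fun hu => ⟨⟨?_, by rw [hu, hQ.2]⟩, hu⟩⟩
    simpa [← hu] using hi₀
  · rw [zero_mul, card_eq_zero, filter_eq_empty_iff]
    rintro u hu rfl
    exact hi₀ (by simpa using (mem_filter.1 hu).2.1)

section Walk

variable {f : ℕ → ℤ} {m k : ℕ}

theorem exists_first_eq_of_le (hstep : ∀ t, f t - 1 ≤ f (t + 1)) {v : ℤ} (h0 : v ≤ f 0)
    {x : ℕ} (hx : f x ≤ v) : ∃ T ≤ x, f T = v ∧ ∀ s < T, v < f s := by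
  classical
  have hex : ∃ t, f t ≤ v := ⟨x, hx⟩
  refine ⟨Nat.find hex, Nat.find_min' hex hx, ?_, fun s hs => not_le.1 (Nat.find_min hex hs)⟩
  have hT := Nat.find_spec hex
  rcases hpos : Nat.find hex with _ | s
  · rw [hpos] at hT; omega
  · have hs := Nat.find_min hex (show s < Nat.find hex by omega)
    rw [hpos] at hT
    have := hstep s
    omega

theorem lt_of_forall_lt_add (hper : ∀ t, f (t + m) = f t - k) {d x : ℕ} (hd : d < m)
    (hgood : ∀ t < m, f d - k < f (d + t)) (hx : x < d) : f d < f x := by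
  have h := hgood (x + m - d) (by omega)
  rw [show d + (x + m - d) = x + m by omega, hper] at h
  omega

/-- The starting times in question are the first hitting times of the `k` lowest values
`μ, …, μ + k - 1` of the walk. -/
theorem card_filter_forall_lt_add (hm : 0 < m) (h0 : f 0 = 0)
    (hstep : ∀ t, f t - 1 ≤ f (t + 1)) (hper : ∀ t, f (t + m) = f t - k) :
    #{d ∈ range m | ∀ t < m, f d - k < f (d + t)} = k := by
  obtain ⟨xm, hxm, hμ⟩ := exists_mem_eq_inf' (nonempty_range_iff.2 hm.ne') f
  set μ := (range m).inf' (nonempty_range_iff.2 hm.ne') f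
  have hμ_le : ∀ x < m, μ ≤ f x := fun x hx => inf'_le f (mem_range.2 hx)
  rw [mem_range] at hxm
  have hμk : μ + k ≤ 1 := by
    have h1 := hμ_le (m - 1) (by omega)
    have h2 := hstep (m - 1)
    rw [show m - 1 + 1 = 0 + m by omega, hper, h0] at h2
    omega
  calc #{d ∈ range m | ∀ t < m, f d - k < f (d + t)} = #(Ico μ (μ + k)) := by
        refine card_bij (fun d _ => f d) ?_ ?_ ?_
        · intro d hd
          simp only [mem_filter, mem_range] at hd
          obtain ⟨hd, hgood⟩ := hd
          refine mem_Ico.2 ⟨hμ_le d hd, ?_⟩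
          rcases le_or_gt d xm with hdx | hxd
          · have := hgood (xm - d) (by omega)
            rw [show d + (xm - d) = xm by omega, ← hμ] at this
            omega
          · have := lt_of_forall_lt_add hper hd hgood hxd
            omega
        · intro d₁ hd₁ d₂ hd₂ h
          simp only [mem_filter, mem_range] at hd₁ hd₂
          by_contra hne
          rcases Nat.lt_or_gt_of_ne hne with h12 | h21
          · exact (lt_of_forall_lt_add hper hd₂.1 hd₂.2 h12).ne' h
          · exact (lt_of_forall_lt_add hper hd₁.1 hd₁.2 h21).ne h
        · intro v hv
          rw [mem_Ico] at hv
          obtain ⟨T, hT, hfT, hbefore⟩ :=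
            exists_first_eq_of_le hstep (v := v) (x := xm) (by omega) (by omega)
          refine ⟨T, mem_filter.2 ⟨mem_range.2 (by omega), fun t ht => ?_⟩, hfT⟩
          rcases lt_or_ge (T + t) m with h | h
          · have := hμ_le _ h
            omega
          · have := hbefore (T + t - m) (by omega)
            rw [show T + t = T + t - m + m by omega, hper]
            omega
    _ = k := by simp

end Walk

section Shift

variable {ι G : Type*} [Fintype ι] [Fintype G] [AddCommGroup G]

theorem card_mul_card_filter_eq_sum [DecidableEq ι] (Q : (ι → G) → Prop) [DecidablePred Q] :
    Fintype.card G * #{w | Q w} = ∑ w : ι → G, #{c : G | Q fun x => w x - c} := by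
  simp only [card_filter]
  rw [sum_comm, ← smul_eq_mul, ← card_univ, ← sum_const]
  refine sum_congr rfl fun c _ => ?_
  exact (Fintype.sum_equiv (Equiv.piCongrRight fun _ => Equiv.subRight c) _ _ fun _ => rfl).symm

theorem card_filter_sub_eq_zero [DecidableEq G] (w : ι → G) (i₀ : ι) (k : ℕ) :
    #{c : G | w i₀ - c = 0 ∧ #{i | w i - c = 0} = k} =
      if #{i | w i = w i₀} = k then 1 else 0 := by
  simp_rw [sub_eq_zero]
  split_ifs with h
  · rw [card_eq_one]
    refine ⟨w i₀, ?_⟩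
    ext c
    simp only [mem_filter, mem_univ, true_and, mem_singleton]
    constructor
    · rintro ⟨rfl, -⟩; rfl
    · rintro rfl; exact ⟨rfl, h⟩
  · rw [card_eq_zero, filter_eq_empty_iff]
    rintro c - ⟨rfl, hc⟩
    exact h hc

end Shift

section Parking

variable {ι : Type*} [Fintype ι] {m : ℕ}

/-- `k` cars preferring spot `0` together with cars preferring the spots `τ x + 1` all park in
the spots `0, …, m - 1`. -/
def IsParking (k : ℕ) (τ : ι → Fin m) : Prop :=
  ∀ t < m, t + 1 ≤ k + #{x | (τ x : ℕ) < t}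

instance (k : ℕ) : DecidablePred (IsParking (ι := ι) (m := m) k) :=
  fun _ => by unfold IsParking; infer_instance

variable [NeZero m]

open Fin.NatCast

theorem val_sub_eq_iff {a c : Fin m} {j : ℕ} (hj : j < m) :
    ((a - c : Fin m) : ℕ) = j ↔ a = (↑((c : ℕ) + j) : Fin m) := by
  rw [Nat.cast_add, Fin.cast_val_eq_self, ← sub_eq_iff_eq_add', Fin.ext_iff,
    Fin.val_cast_of_lt hj]

theorem card_filter_val_sub_lt (τ : ι → Fin m) (c : Fin m) {t : ℕ} (ht : t ≤ m) :
    #{x | ((τ x - c : Fin m) : ℕ) < t} =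
      ∑ j ∈ range t, #{x | τ x = (↑((c : ℕ) + j) : Fin m)} := by
  rw [card_eq_sum_card_fiberwise (f := fun x => ((τ x - c : Fin m) : ℕ)) (t := range t)
    fun x hx => mem_range.2 (mem_filter.1 hx).2]
  refine sum_congr rfl fun j hj => congrArg card ?_
  ext x
  simp only [mem_filter, mem_univ, true_and, mem_range] at hj ⊢
  rw [← val_sub_eq_iff (by omega)]
  constructor
  · exact And.right
  · intro h; exact ⟨h ▸ hj, h⟩

theorem IsParking.val_add_one_lt {k : ℕ} {τ : ι → Fin m} (h : IsParking k τ)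
    (hcard : Fintype.card ι + k = m) (x : ι) : (τ x : ℕ) + 1 < m := by
  have hm := NeZero.pos m
  have hall := h (m - 1) (by omega)
  have hle := card_filter_le (univ : Finset ι) fun x => (τ x : ℕ) < m - 1
  rw [card_univ] at hle
  have := (card_filter_eq_iff (s := univ) (p := fun x => (τ x : ℕ) < m - 1)).1
    (by rw [card_univ]; omega) x (mem_univ x)
  omega

/-- The cycle lemma. Reading `τ` cyclically, `t ↦ #{x | τ x < t} - t` extends to a walk with
steps `≥ -1` that drops by `k` per period, and the shifts `c` with `IsParking k (τ - c)` are the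
starting times from which it stays above its start minus `k` for a whole period. -/
theorem card_filter_isParking_sub {k : ℕ} (hcard : Fintype.card ι + k = m) (τ : ι → Fin m) :
    #{c : Fin m | IsParking k fun x => τ x - c} = k := by
  set N : ℕ → ℕ := fun j => #{x | τ x = (j : Fin m)}
  set f : ℕ → ℤ := fun t => ∑ j ∈ range t, (N j : ℤ) - t
  have hshift (c : Fin m) {t : ℕ} (ht : t ≤ m) :
      (#{x | ((τ x - c : Fin m) : ℕ) < t} : ℤ) = f (c + t) - f c + t := by
    rw [card_filter_val_sub_lt τ c ht]
    change ((∑ j ∈ range t, N (c + j) : ℕ) : ℤ) = _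
    simp only [f, sum_range_add]
    push_cast
    ring
  have hperiod (t : ℕ) : ∑ j ∈ range m, N (t + j) = Fintype.card ι := by
    have h := card_filter_val_sub_lt τ (t : Fin m) le_rfl
    rw [filter_true_of_mem fun x _ => Fin.is_lt _, card_univ] at h
    simp only [h, N, Nat.cast_add, Fin.cast_val_eq_self]
  have hper (t : ℕ) : f (t + m) = f t - k := by
    simp only [f, sum_range_add, ← Nat.cast_sum, hperiod]
    push_cast
    omega
  have hstep (t : ℕ) : f t - 1 ≤ f (t + 1) := by
    simp only [f, sum_range_succ]
    push_cast
    omega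
  have hgood (c : Fin m) : IsParking k (fun x => τ x - c) ↔ ∀ t < m, f c - k < f (c + t) := by
    simp only [IsParking]
    refine forall₂_congr fun t ht => ?_
    have := hshift c ht.le
    omega
  simp only [hgood]
  rw [card_filter_univ_fin_val (P := fun d => ∀ t < m, f d - k < f (d + t))]
  exact card_filter_forall_lt_add (NeZero.pos m) (by simp [f]) hstep hper

theorem card_isParking_mul [DecidableEq ι] {k : ℕ} (hcard : Fintype.card ι + k = m) :
    m * #{τ : ι → Fin m | IsParking k τ} = k * m ^ Fintype.card ι := by
  have h := card_mul_card_filter_eq_sum (G := Fin m) (ι := ι) (IsParking k)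
  rw [Fintype.card_fin] at h
  simp only [h, card_filter_isParking_sub hcard, sum_const, card_univ, Fintype.card_fun,
    Fintype.card_fin, smul_eq_mul, mul_comm]

theorem card_filter_isParking_one_and_lel [DecidableEq ι] (hcard : Fintype.card ι + 1 = m)
    (i₀ : ι) (k : ℕ) :
    #{w : ι → Fin m | IsParking 1 w ∧ #{i | w i = w i₀} = k} =
      #{u : ι → Fin m | u i₀ = 0 ∧ #{i | u i = 0} = k} := by
  -- Every orbit of shifts with `lel = k` meets each side exactly once.
  refine Nat.eq_of_mul_eq_mul_left (NeZero.pos m) ?_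
  have h := card_mul_card_filter_eq_sum (G := Fin m) fun w : ι → Fin m =>
    IsParking 1 w ∧ #{i | w i = w i₀} = k
  have h' := card_mul_card_filter_eq_sum (G := Fin m) fun u : ι → Fin m =>
    u i₀ = 0 ∧ #{i | u i = 0} = k
  rw [Fintype.card_fin] at h h'
  rw [h, h']
  refine sum_congr rfl fun w _ => ?_
  simp only [card_filter_sub_eq_zero, sub_left_inj]
  split_ifs with hk
  · simp [hk, card_filter_isParking_sub hcard]
  · simp [hk]

end Parking

section PF
variable {n : ℕ}

theorem mem_pf_iff (π : Fin n → Fin n) :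
    π ∈ pf n n ↔ ∀ i ≤ n, i ≤ #{x | (π x : ℕ) < i} := by
  simp only [pf, mem_filter, mem_univ, true_and, Nat.add_one_le_iff, add_comm _ n,
    add_le_add_iff_left]

theorem mem_pf_iff_isParking_castSucc (π : Fin n → Fin n) :
    π ∈ pf n n ↔ IsParking 1 fun x => (π x).castSucc := by
  simp only [mem_pf_iff, IsParking, Fin.val_castSucc, Nat.lt_add_one_iff]
  exact forall₂_congr fun t _ => by omega

theorem card_pf_filter_lel (i₀ : Fin n) (k : ℕ) :
    #{π ∈ pf n n | #{i | π i = π i₀} = k} =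
      #{w : Fin n → Fin (n + 1) | IsParking 1 w ∧ #{i | w i = w i₀} = k} := by
  refine card_bij (fun π _ x => (π x).castSucc) (fun π hπ => ?_) (fun π₁ _ π₂ _ h => ?_)
    fun w hw => ?_
  · simp only [mem_filter, mem_univ, true_and, Fin.castSucc_inj] at hπ ⊢
    exact ⟨(mem_pf_iff_isParking_castSucc π).1 hπ.1, hπ.2⟩
  · funext x
    exact Fin.castSucc_injective _ (congrFun h x)
  · simp only [mem_filter, mem_univ, true_and] at hw
    have hlt := hw.1.val_add_one_lt (by simp)
    obtain ⟨π, rfl⟩ : ∃ π : Fin n → Fin n, (fun x => (π x).castSucc) = w :=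
      ⟨fun x => (w x).castLT (by have := hlt x; omega), funext fun x => Fin.castSucc_castLT _ _⟩
    simp only [Fin.castSucc_inj] at hw
    exact ⟨π, by simpa [mem_pf_iff_isParking_castSucc] using hw, rfl⟩

variable [NeZero n]

theorem card_filter_val_lt_eq_card_add {P : Finset (Fin n)} {π : Fin n → Fin n}
    (hP : ({i | π i = 0} : Finset _) = P) {i : ℕ} (hi : 0 < i) :
    #{x | (π x : ℕ) < i} = #P + #{x : {x // x ∉ P} | (π x : ℕ) < i} := by
  rw [card_filter_subtype (· ∉ P) fun x => (π x : ℕ) < i,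
    ← card_filter_add_card_filter_not (p := (· ∈ P)), filter_filter, filter_filter]
  congr 2
  · ext x
    simp only [mem_filter, mem_univ, true_and, and_iff_right_iff_imp]
    intro hx
    simp [← hP] at hx
    simp [hx, hi]
  · ext x
    simp [and_comm]

theorem mem_pf_iff_isParking_sub_one {P : Finset (Fin n)} {π : Fin n → Fin n}
    (hP : ({i | π i = 0} : Finset _) = P) :
    π ∈ pf n n ↔ IsParking #P fun x : {x // x ∉ P} => π x - 1 := by
  have hcount (t : ℕ) : #{x : {x // x ∉ P} | ((π x - 1 : Fin n) : ℕ) < t} =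
      #{x : {x // x ∉ P} | (π x : ℕ) < t + 1} := by
    refine congrArg card (filter_congr fun x _ => ?_)
    have hne : π x ≠ 0 := fun h => x.2 (by simp [← hP, h])
    have := Fin.val_ne_zero_iff.2 hne
    rw [Fin.val_sub_one_of_ne_zero hne]
    omega
  simp_rw [mem_pf_iff, IsParking, hcount, ← card_filter_val_lt_eq_card_add hP (Nat.succ_pos _)]
  refine ⟨fun h t ht => h _ ht, fun h i hi => ?_⟩
  cases i with
  | zero => exact Nat.zero_le _
  | succ t => exact h t hi

theorem card_pf_filter_zeros_eq (P : Finset (Fin n)) :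
    #{π ∈ pf n n | ({i | π i = 0} : Finset _) = P} =
      #{τ : {x // x ∉ P} → Fin n | IsParking #P τ} := by
  refine card_bij' (fun π _ x => π x - 1)
    (fun τ _ x => if h : x ∈ P then 0 else τ ⟨x, h⟩ + 1)
    (fun π hπ => ?_) (fun τ hτ => ?_) (fun π hπ => ?_) (fun τ _ => ?_)
  · simp only [mem_filter, mem_univ, true_and] at hπ ⊢
    exact (mem_pf_iff_isParking_sub_one hπ.2).1 hπ.1
  · simp only [mem_filter, mem_univ, true_and] at hτ ⊢
    have hcard : Fintype.card {x // x ∉ P} + #P = n := by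
      simpa using card_subtype_notMem_add_card P
    have hne (y : {x // x ∉ P}) : τ y + 1 ≠ 0 := by
      rw [Ne, Fin.ext_iff, Fin.val_add_one_of_lt' (hτ.val_add_one_lt hcard y)]
      simp
    have hP : ({i | (if h : i ∈ P then 0 else τ ⟨i, h⟩ + 1) = 0} : Finset _) = P := by
      ext x
      by_cases hx : x ∈ P <;> simp [hx, hne]
    refine ⟨(mem_pf_iff_isParking_sub_one hP).2 ?_, hP⟩
    convert hτ using 1
    funext x
    simp [x.2]
  · simp only [mem_filter] at hπ
    funext x
    by_cases hx : x ∈ P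
    · have h0 : π x = 0 := by
        rw [← hπ.2] at hx
        simpa using hx
      simp [hx, h0]
    · simp [hx]
  · funext x
    simp [x.2]

theorem card_pf_filter_ones_mul (k : ℕ) :
    n * #{π ∈ pf n n | #{i | (π i : ℕ) = 0} = k} = k * n.choose k * n ^ (n - k) := by
  simp only [Fin.val_eq_zero_iff]
  rw [card_eq_sum_card_fiberwise (f := fun π : Fin n → Fin n => ({i | π i = 0} : Finset _))
    (t := powersetCard k univ) fun π hπ => by simpa using (mem_filter.1 hπ).2, mul_sum]
  have hfiber (P : Finset (Fin n)) (hP : P ∈ powersetCard k univ) :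
      n * #{π ∈ {π ∈ pf n n | #{i | π i = 0} = k} | ({i | π i = 0} : Finset _) = P} =
        k * n ^ (n - k) := by
    rw [mem_powersetCard] at hP
    have hcard : Fintype.card {x // x ∉ P} + #P = n := by
      simpa using card_subtype_notMem_add_card P
    rw [filter_filter, ← hP.2, filter_congr fun π _ => and_iff_right_of_imp fun h => h ▸ rfl,
      card_pf_filter_zeros_eq, card_isParking_mul hcard]
    congr 2
    omega
  rw [sum_congr rfl hfiber, sum_const, card_powersetCard, card_univ, Fintype.card_fin,
    smul_eq_mul]
  ring

end PF

/-- For classical parking functions (`m = n`), the statistic `lel` (number of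
entries equal to the first entry) is equidistributed with `ones` (number of
entries equal to `1`, i.e. with `Fin`-value `0`). -/
theorem lel_ones_equidistributed (n : ℕ) (hn : 1 ≤ n) (k : ℕ) :
    ((pf n n).filter (fun π =>
        (Finset.univ.filter (fun i => π i = π ⟨0, by omega⟩)).card = k)).card =
    ((pf n n).filter (fun π =>
        (Finset.univ.filter (fun i => (π i : ℕ) = 0)).card = k)).card := by
  have : NeZero n := ⟨by omega⟩
  refine Nat.eq_of_mul_eq_mul_left (by omega : 0 < n) ?_
  rw [card_pf_filter_lel, card_filter_isParking_one_and_lel (by simp),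
    card_filter_apply_eq_zero_and_card_zeros, card_pf_filter_ones_mul]
  have h := card_mul_card_filter_mem_powersetCard (mem_univ (⟨0, by omega⟩ : Fin n)) k
  rw [card_univ, Fintype.card_fin] at h
  simp only [Fintype.card_fin, Nat.add_sub_cancel, ← mul_assoc, h]
end

section
/- The number of (a,b)-parking functions of length m is a(a + mb)^{m-1}. -/
/-!
Encode a sequence with entries in `[1, n]`, `n = a + m * b`, as `σ : Fin m → ZMod n` via
`π k = (σ k).val + 1`. Adding a constant `c` to every entry of `σ` gives orbits of size `n`, and
each orbit contains exactly `a` parking functions: with `d j = b * #{k | σ k = j} - 1`, the shift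
`σ + c` is a parking function iff every proper partial sum of `d`, read cyclically from `-c`,
exceeds the full sum `-a`. Since every `d j ≥ -1`, the cycle lemma says exactly `a` starting
points have this property, so `#PF * n = a * n ^ m`.
-/

/-- `π` is an `(a,b)`-parking function of length `m`: a sequence of positive
integers whose weakly increasing rearrangement `λ₁ ≤ … ≤ λ_m` satisfies
`λ_i ≤ a + (i-1)b`; equivalently, for every `i ∈ [m]`,
`#{k : π k ≤ a + (i-1)b} ≥ i`. -/
def IsABPF (a b m : ℕ) (π : Fin m → ℕ) : Prop :=
  (∀ k, 1 ≤ π k) ∧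
  ∀ i : Fin m, (i : ℕ) + 1 ≤ (Finset.univ.filter (fun k => π k ≤ a + (i : ℕ) * b)).card

open Finset

section PrefixMin

variable {P : ℕ → ℤ} {n A T : ℕ}

def prefixMin (P : ℕ → ℤ) (T : ℕ) : ℤ := (range (T + 1)).inf' nonempty_range_add_one P

lemma prefixMin_le {y : ℕ} (hy : y ≤ T) : prefixMin P T ≤ P y :=
  inf'_le _ (mem_range_succ_iff.2 hy)

lemma le_prefixMin_iff {c : ℤ} : c ≤ prefixMin P T ↔ ∀ y ≤ T, c ≤ P y := by
  simp only [prefixMin, le_inf'_iff, mem_range, Order.lt_add_one_iff]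

lemma exists_eq_prefixMin (P : ℕ → ℤ) (T : ℕ) : ∃ y ≤ T, P y = prefixMin P T := by
  obtain ⟨y, hy, h⟩ := exists_mem_eq_inf' nonempty_range_add_one P
  exact ⟨y, mem_range_succ_iff.1 hy, h.symm⟩

lemma prefixMin_succ (P : ℕ → ℤ) (T : ℕ) :
    prefixMin P (T + 1) = min (P (T + 1)) (prefixMin P T) := by
  simp only [prefixMin, range_add_one (n := T + 1)]
  exact inf'_insert _ _

lemma prefixMin_sub_prefixMin_succ (hstep : ∀ t, P t - 1 ≤ P (t + 1)) (T : ℕ) :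
    prefixMin P T - prefixMin P (T + 1) = if ∀ y < T + 1, P (T + 1) < P y then 1 else 0 := by
  have := prefixMin_le (P := P) (le_refl T)
  have := hstep T
  rw [prefixMin_succ]
  split_ifs with hrec
  · obtain ⟨y, hy, hPy⟩ := exists_eq_prefixMin P T
    have := hrec y (by omega)
    omega
  · push Not at hrec
    obtain ⟨y, hy, hPy⟩ := hrec
    have := prefixMin_le (P := P) (show y ≤ T by omega)
    omega

lemma card_strict_records_Ioc (hstep : ∀ t, P t - 1 ≤ P (t + 1)) (T d : ℕ) :
    (#{t ∈ Ioc T (T + d) | ∀ y < t, P t < P y} : ℤ) = prefixMin P T - prefixMin P (T + d) := by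
  induction d with
  | zero => simp
  | succ d ih =>
    rw [natCast_card_filter] at ih ⊢
    rw [← add_assoc, sum_Ioc_succ_top (by omega), ih, ← prefixMin_sub_prefixMin_succ hstep]
    ring

lemma prefixMin_add_period (hper : ∀ t, P (t + n) = P t - A) (hT : n ≤ T + 1) :
    prefixMin P (T + n) = prefixMin P T - A := by
  apply le_antisymm
  · obtain ⟨y, hy, hPy⟩ := exists_eq_prefixMin P T
    rw [← hPy, ← hper]
    exact prefixMin_le (by omega)
  · refine le_prefixMin_iff.2 fun y hy => ?_
    by_cases hny : n ≤ y
    · have := hper (y - n)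
      rw [Nat.sub_add_cancel hny] at this
      have := prefixMin_le (P := P) (show y - n ≤ T by omega)
      omega
    · have := prefixMin_le (P := P) (show y ≤ T by omega)
      omega

lemma forall_lt_iff_forall_Ico (hn : 0 < n) (hper : ∀ t, P (t + n) = P t - A) {t : ℕ}
    (ht : n ≤ t) : (∀ y < t, P t < P y) ↔ ∀ y ∈ Ico (t - n) t, P t < P y := by
  refine ⟨fun h y hy => h y (mem_Ico.1 hy).2, fun h => ?_⟩
  suffices ∀ k y, t - n ≤ y + k * n → y < t → P t < P y from
    fun y hy => this t y (by have := Nat.le_mul_of_pos_right t hn; omega) hy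
  intro k
  induction k with
  | zero => exact fun y hy hyt => h y (mem_Ico.2 ⟨by simpa using hy, hyt⟩)
  | succ k ih =>
    intro y hy hyt
    by_cases hwin : t - n ≤ y
    · exact h y (mem_Ico.2 ⟨hwin, hyt⟩)
    · have := ih (y + n) (by nlinarith) (by omega)
      have := hper y
      omega

theorem card_strict_window_minima (hn : 0 < n) (hstep : ∀ t, P t - 1 ≤ P (t + 1))
    (hper : ∀ t, P (t + n) = P t - A) :
    #{s ∈ range n | ∀ x < n, P (s + n) < P (s + x)} = A := by
  have hcount := card_strict_records_Ioc hstep (n - 1) n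
  rw [prefixMin_add_period hper (by omega), sub_sub_cancel] at hcount
  rw [← Nat.cast_inj (R := ℤ), ← hcount]
  congr 1
  -- `s ↦ s + n` matches these `s` with the strict records of `P` in `(n - 1, 2 * n - 1]`
  refine card_nbij' (· + n) (· - n) ?_ ?_ (fun s _ => Nat.add_sub_cancel s n) ?_
  · intro s hs
    simp only [coe_filter, mem_range, Set.mem_ofPred_eq, mem_Ioc] at hs ⊢
    refine ⟨by omega, (forall_lt_iff_forall_Ico hn hper (by omega)).2 fun y hy => ?_⟩
    obtain ⟨hsy, hys⟩ := mem_Ico.1 hy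
    simpa [Nat.add_sub_cancel' (show s ≤ y by omega)] using hs.2 (y - s) (by omega)
  · intro t ht
    simp only [coe_filter, mem_range, Set.mem_ofPred_eq, mem_Ioc] at ht ⊢
    refine ⟨by omega, fun x hx => ?_⟩
    rw [Nat.sub_add_cancel (by omega)]
    exact (forall_lt_iff_forall_Ico hn hper (by omega)).1 ht.2 _ (mem_Ico.2 ⟨by omega, by omega⟩)
  · intro t ht
    simp only [coe_filter, mem_Ioc, Set.mem_ofPred_eq] at ht
    exact Nat.sub_add_cancel (by omega)

end PrefixMin

lemma ZMod.sum_range_add {M : Type*} [AddCommMonoid M] {n : ℕ} [NeZero n] (f : ZMod n → M)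
    (e : ZMod n) : ∑ i ∈ range n, f (e + i) = ∑ j, f j := by
  rw [← Equiv.sum_comp (Equiv.addLeft e) f]
  refine sum_nbij' (↑) ZMod.val (fun _ _ => mem_univ _) (fun j _ => mem_range.2 j.val_lt)
    (fun i hi => ZMod.val_cast_of_lt (mem_range.1 hi)) (fun j _ => ZMod.natCast_zmod_val j)
    (fun _ _ => rfl)

theorem cycle_lemma {n A : ℕ} [NeZero n] (d : ZMod n → ℤ) (hd : ∀ j, -1 ≤ d j)
    (hsum : ∑ j, d j = -A) :
    #{e : ZMod n | ∀ x < n, -A < ∑ i ∈ range x, d (e + i)} = A := by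
  set P : ℕ → ℤ := fun T => ∑ i ∈ range T, d i
  have hshift (s x : ℕ) : P (s + x) = P s + ∑ i ∈ range x, d (s + i) := by
    simp only [P, sum_range_add, Nat.cast_add]
  have hstep (t : ℕ) : P t - 1 ≤ P (t + 1) := by
    simp only [P, sum_range_succ]
    linarith [hd t]
  have hper (t : ℕ) : P (t + n) = P t - A := by
    rw [hshift, ZMod.sum_range_add, hsum, sub_eq_add_neg]
  have hiff (e : ZMod n) : (∀ x < n, -(A : ℤ) < ∑ i ∈ range x, d (e + i)) ↔
      ∀ x < n, P (e.val + n) < P (e.val + x) := by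
    simp only [hper, hshift, ZMod.natCast_zmod_val]
    exact forall₂_congr fun x _ => by constructor <;> intro h <;> linarith
  refine Eq.trans ?_ (card_strict_window_minima (NeZero.pos n) hstep hper)
  refine card_nbij' ZMod.val (↑) (fun e he => ?_) (fun s hs => ?_)
    (fun e _ => ZMod.natCast_zmod_val e) (fun s hs => ZMod.val_cast_of_lt ?_)
  · simp only [coe_filter, mem_univ, true_and, Set.mem_ofPred_eq, mem_range] at he ⊢
    exact ⟨e.val_lt, (hiff e).1 he⟩
  · simp only [coe_filter, mem_univ, true_and, Set.mem_ofPred_eq, mem_range] at hs ⊢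
    rw [hiff, ZMod.val_cast_of_lt hs.1]
    exact hs.2
  · simp only [coe_filter, mem_range, Set.mem_ofPred_eq] at hs
    exact hs.1

lemma IsABPF.apply_le {a b m : ℕ} {π : Fin m → ℕ} (h : IsABPF a b m π) (k : Fin m) :
    π k ≤ a + (m - 1) * b := by
  have hm := k.pos
  have hall : m - 1 + 1 ≤ #{j | π j ≤ a + (m - 1) * b} := h.2 ⟨m - 1, by omega⟩
  have : #{j | π j ≤ a + (m - 1) * b} = #(univ : Finset (Fin m)) := by
    refine le_antisymm (card_filter_le _ _) ?_
    simp only [card_univ, Fintype.card_fin]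
    omega
  exact (card_filter_eq_iff.1 this) k (mem_univ k)

lemma isABPF_add_one_iff {a b m : ℕ} (hb : 0 < b) (v : Fin m → ℕ) :
    IsABPF a b m (fun k => v k + 1) ↔ ∀ x < a + m * b, x < a + #{k | v k < x} * b := by
  simp only [IsABPF, le_add_iff_nonneg_left, zero_le, implies_true, true_and]
  change (∀ i : Fin m, i + 1 ≤ #{k | v k < a + i * b}) ↔ _
  constructor
  · intro h x hx
    by_cases hxa : x < a
    · omega
    have hdiv := Nat.div_add_mod' (x - a) b
    have hmod := Nat.mod_lt (x - a) hb
    set i := (x - a) / b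
    have him : i < m := by
      by_contra!
      have := Nat.mul_le_mul_right b this
      omega
    have hmono : #{k | v k < a + i * b} ≤ #{k | v k < x} :=
      card_le_card (monotone_filter_right _ fun k hk => by omega)
    have hi : i + 1 ≤ #{k | v k < a + i * b} := h ⟨i, him⟩
    have := Nat.mul_le_mul_right b (hi.trans hmono)
    rw [add_mul, one_mul] at this
    omega
  · intro h i
    have := h (a + i * b) (by have := Nat.mul_lt_mul_of_pos_right i.2 hb; omega)
    exact Nat.lt_of_mul_lt_mul_right (a := b) (by omega)

lemma card_val_add_lt {m n : ℕ} [NeZero n] (σ : Fin m → ZMod n) (c : ZMod n) {x : ℕ}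
    (hx : x ≤ n) : #{k | (σ k + c).val < x} = ∑ i ∈ range x, #{k | σ k = -c + i} := by
  calc #{k | (σ k + c).val < x} = #{k | (σ k + c).val ∈ range x} := by simp only [mem_range]
    _ = ∑ i ∈ range x, #{k | (σ k + c).val = i} :=
      (sum_card_fiberwise_eq_card_filter _ _ _).symm
    _ = ∑ i ∈ range x, #{k | σ k = -c + i} := sum_congr rfl fun i hi => by
      have hin : i < n := (mem_range.1 hi).trans_le hx
      congr 1
      refine filter_congr fun k _ => ?_
      rw [eq_neg_add_iff_add_eq, add_comm c, ← (ZMod.val_injective n).eq_iff,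
        ZMod.val_cast_of_lt hin]

lemma card_filter_mul_card_eq_of_shifts {ι G : Type*} [Fintype ι] [DecidableEq ι] [AddGroup G]
    [Fintype G] (Q : (ι → G) → Prop) [DecidablePred Q] {a : ℕ}
    (h : ∀ σ, #{c : G | Q (σ + fun _ => c)} = a) :
    #{σ | Q σ} * Fintype.card G = a * Fintype.card G ^ Fintype.card ι := by
  have hshift (c : G) : #{σ | Q (σ + fun _ => c)} = #{σ | Q σ} := by
    simp only [card_filter]
    exact Equiv.sum_comp (Equiv.addRight fun _ => c) fun σ => if Q σ then 1 else 0
  calc #{σ | Q σ} * Fintype.card G = ∑ c : G, #{σ | Q (σ + fun _ => c)} := by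
        rw [sum_congr rfl fun c _ => hshift c, sum_const, card_univ, smul_eq_mul, mul_comm]
    _ = ∑ σ : ι → G, #{c : G | Q (σ + fun _ => c)} := by
        simp only [card_filter]
        exact sum_comm
    _ = a * Fintype.card G ^ Fintype.card ι := by
        simp [h, mul_comm]

open scoped Classical in
theorem card_shifts_isABPF {a b m n : ℕ} [NeZero n] (hb : 0 < b) (hn : a + m * b = n)
    (σ : Fin m → ZMod n) :
    #{c : ZMod n | IsABPF a b m (fun k => (σ k + c).val + 1)} = a := by
  set d : ZMod n → ℤ := fun j => #{k | σ k = j} * b - 1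
  have hsum : ∑ j, d j = -a := by
    have hfibers : ∑ j, #{k | σ k = j} = m := by
      simp [sum_card_fiberwise_eq_card_filter]
    simp only [d, sum_sub_distrib, ← sum_mul, ← Nat.cast_sum, hfibers, sum_const, card_univ,
      ZMod.card, nsmul_eq_mul, mul_one, ← hn]
    push_cast
    ring
  have hd (j : ZMod n) : -1 ≤ d j := by
    simp only [d, neg_le_sub_iff_le_add, le_add_iff_nonneg_left]
    positivity
  refine Eq.trans ?_ (cycle_lemma d hd hsum)
  refine card_equiv (Equiv.neg _) fun c => ?_
  simp only [mem_filter, mem_univ, true_and, Equiv.neg_apply, isABPF_add_one_iff hb, hn, d]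
  refine forall₂_congr fun x hx => ?_
  rw [card_val_add_lt σ c hx.le, sum_sub_distrib, ← sum_mul]
  simp only [sum_const, card_range, nsmul_eq_mul, mul_one, ← Nat.cast_sum]
  omega

open scoped Classical in
lemma ncard_setOf_isABPF {a b m n : ℕ} [NeZero n] (hn : a + (m - 1) * b < n) :
    {π | IsABPF a b m π}.ncard =
      #{σ : Fin m → ZMod n | IsABPF a b m (fun k => (σ k).val + 1)} := by
  set lift : (Fin m → ZMod n) → Fin m → ℕ := fun σ k => (σ k).val + 1
  have hinj : lift.Injective :=
    fun σ τ h => funext fun k => ZMod.val_injective n (by simpa [lift] using congrFun h k)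
  have himage : {π | IsABPF a b m π} = lift '' {σ | IsABPF a b m (lift σ)} := by
    ext π
    refine ⟨fun hπ => ⟨fun k => ((π k - 1 : ℕ) : ZMod n), ?_⟩, ?_⟩
    · have hlift : lift (fun k => ((π k - 1 : ℕ) : ZMod n)) = π := funext fun k => by
        have := hπ.apply_le k
        simp only [lift, ZMod.val_cast_of_lt (show π k - 1 < n by omega)]
        have := hπ.1 k
        omega
      simpa [hlift] using hπ
    · rintro ⟨σ, hσ, rfl⟩
      exact hσ
  rw [himage, Set.ncard_image_of_injective _ hinj, ← coe_filter_univ, Set.ncard_coe_finset]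

theorem card_ABPF_general (a b m : ℕ) (hb : 1 ≤ b) (hm : 1 ≤ m) :
    {π : Fin m → ℕ | IsABPF a b m π}.ncard = a * (a + m * b) ^ (m - 1) := by
  classical
  have hpos : 0 < a + m * b := by have := Nat.mul_pos hm hb; omega
  have : NeZero (a + m * b) := ⟨hpos.ne'⟩
  have hcount := card_filter_mul_card_eq_of_shifts
    (fun σ : Fin m → ZMod (a + m * b) => IsABPF a b m fun k => (σ k).val + 1)
    (card_shifts_isABPF hb rfl)
  rw [ZMod.card, Fintype.card_fin, ← pow_sub_one_mul (by omega : m ≠ 0), ← mul_assoc] at hcount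
  have hbound : a + (m - 1) * b < a + m * b := by
    have := Nat.mul_lt_mul_of_pos_right (Nat.sub_lt hm one_pos) hb
    omega
  rw [ncard_setOf_isABPF hbound, Nat.eq_of_mul_eq_mul_right hpos hcount]

theorem card_ABPF (a b m : ℕ) (ha : 1 ≤ a) (hb : 1 ≤ b) (hm : 1 ≤ m) :
    {π : Fin m → ℕ | IsABPF a b m π}.ncard = a * (a + m * b) ^ (m - 1) :=
  card_ABPF_general a b m hb hm
end
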